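/- For t ≥ 1, the number ℓ_{n,t} of Lyndon words of length n over a q-letter ordered alphabet that end with exactly t copies of the maximal symbol (i.e., of the form u·b·(q−1)^t with b ≠ q−1) is at most ℓ_{n−t}, the number of Lyndon words of length n−t. -/

import Mathlib

/-!
Chopping off the final run `(q-1)^t` of a Lyndon word `u·b·(q-1)^t` and raising `b` to its
successor `b+1` gives a Lyndon word `u·(b+1)` of length `n - t`, and `u·b` is recovered from it.
It stays Lyndon because each rotation of `u·(b+1)` starts at a position inside `u`: the
comparison of `u·b·(q-1)^t` with the corresponding rotation is decided within the first
`|u| + 1` letters, and raising `b` (which appears in both words at the same offset) keeps it.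
-/

def IsLyndonList {A : Type*} [LinearOrder A] (w : List A) : Prop :=
  ∀ i, 0 < i → i < w.length → w < w.rotate i

namespace List

variable {α : Type*}

theorem rotate_append_of_le_length {u : List α} {i : ℕ} (hi : i ≤ u.length) (v : List α) :
    (u ++ v).rotate i = u.drop i ++ v ++ u.take i := by
  rw [rotate_eq_drop_append_take (by simp; omega), drop_append_of_le_length hi,
    take_append_of_le_length hi, append_assoc]

variable [LinearOrder α]

theorem append_singleton_lt_of_append_lt {d x y z : List α} {b b' : α}
    (hlen : d.length < x.length) (hb : b < b') (h : x ++ y < d ++ b :: z) (z' : List α) :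
    x ++ [b'] < d ++ b' :: z' := by
  induction d generalizing x with
  | nil =>
    obtain _ | ⟨c, x⟩ := x
    · simp at hlen
    have hcb : c ≤ b := by
      rcases cons_lt_cons_iff.1 h with hlt | ⟨rfl, -⟩
      exacts [hlt.le, le_rfl]
    exact cons_lt_cons_iff.2 (Or.inl (hcb.trans_lt hb))
  | cons a d ih =>
    obtain _ | ⟨c, x⟩ := x
    · simp at hlen
    rcases cons_lt_cons_iff.1 h with hlt | ⟨rfl, htail⟩
    · exact cons_lt_cons_iff.2 (Or.inl hlt)
    · exact cons_lt_cons_iff.2 (Or.inr ⟨rfl, ih (by simpa using hlen) htail⟩)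

end List

open List

theorem IsLyndonList.append_singleton_of_lt {α : Type*} [LinearOrder α] {u v : List α}
    {b b' : α} (hw : IsLyndonList (u ++ b :: v)) (hb : b < b') : IsLyndonList (u ++ [b']) := by
  intro i hi hilen
  have hiu : i ≤ u.length := by simp at hilen; omega
  have hrot := hw i hi (by simp; omega)
  rw [rotate_append_of_le_length hiu] at hrot ⊢
  simp only [append_assoc, cons_append, nil_append] at hrot ⊢
  exact append_singleton_lt_of_append_lt (by simp; omega) hb hrot _

theorem ncard_lyndon_append_replicate_le {α : Type*} [LinearOrder α] [SuccOrder α] [Finite α]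
    (m : α) (n t : ℕ) :
    Set.ncard {w : List α | w.length = n ∧ IsLyndonList w ∧
        ∃ u : List α, ∃ b : α, ¬IsMax b ∧ w = u ++ [b] ++ replicate t m} ≤
      Set.ncard {w : List α | w.length = n - t ∧ IsLyndonList w} := by
  set f : List α → List α := fun w => (w.take (w.length - t)).modifyLast Order.succ
  have hf : ∀ u b, f (u ++ [b] ++ replicate t m) = u ++ [Order.succ b] := by
    intro u b
    simp only [f, length_append, length_replicate, Nat.add_sub_cancel, take_left',
      modifyLast_concat]
  refine Set.ncard_le_ncard_of_injOn f ?_ ?_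
    ((finite_length_eq α _).subset fun _ hw => hw.1)
  · rintro _ ⟨rfl, hw, u, b, hb, rfl⟩
    rw [hf]
    refine ⟨by simp; omega, ?_⟩
    simp only [append_assoc, singleton_append] at hw
    exact hw.append_singleton_of_lt (Order.lt_succ_of_not_isMax hb)
  · rintro _ ⟨-, -, u₁, b₁, hb₁, rfl⟩ _ ⟨-, -, u₂, b₂, hb₂, rfl⟩ heq
    rw [hf, hf] at heq
    obtain ⟨rfl, hsucc⟩ := append_inj' heq rfl
    rw [singleton_inj, Order.succ_eq_succ_iff_of_not_isMax hb₁ hb₂] at hsucc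
    rw [hsucc]

theorem Fin.isMax_iff_val_eq {q : ℕ} (b : Fin q) : IsMax b ↔ (b : ℕ) = q - 1 := by
  refine ⟨fun h => ?_, fun h c _ => Fin.le_def.2 (by have := c.isLt; omega)⟩
  have := b.isLt
  have hle : b ≤ ⟨q - 1, by omega⟩ := by rw [Fin.le_def]; dsimp only; omega
  have hge := Fin.le_def.1 (h hle)
  dsimp only at hge
  omega

/-- For `t ≥ 1`, the number of Lyndon words of length `n` ending with exactly `t`
copies of the maximal symbol (of the form `u·b·(q-1)^t`, `b ≠ q-1`) is at most the
number of Lyndon words of length `n - t`. -/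
theorem stmt10 (q n t : ℕ) (hq : 0 < q) :
    Set.ncard {w : List (Fin q) | w.length = n ∧ IsLyndonList w ∧
        ∃ u : List (Fin q), ∃ b : Fin q, (b : ℕ) ≠ q - 1 ∧
          w = u ++ [b] ++ List.replicate t (⟨q - 1, by omega⟩ : Fin q)} ≤
      Set.ncard {w : List (Fin q) | w.length = n - t ∧ IsLyndonList w} := by
  simpa only [Fin.isMax_iff_val_eq] using
    ncard_lyndon_append_replicate_le (⟨q - 1, by omega⟩ : Fin q) n t
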